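/- Let A, B ∈ SL(2,ℝ). If tr([A,B]) < 2, where [A,B] = ABA⁻¹B⁻¹, then both A and B are hyperbolic, i.e., |tr(A)| > 2 and |tr(B)| > 2. -/
import Mathlib

/-- Crux inequality: if `p^2 + 4*b*c ≤ 0` then
`(p*f+q*b)*(p*g+q*c) ≤ (b*g - c*f)^2` for all `q f g`. -/
lemma crux_goldman (p q b c f g : ℝ) (h1 : p^2 + 4*(b*c) ≤ 0) :
    (p*f+q*b)*(p*g+q*c) ≤ (b*g - c*f)^2 := by
  rcases eq_or_lt_of_le (le_trans (by nlinarith [sq_nonneg p] : (4:ℝ)*(b*c) ≤ p^2 + 4*(b*c)) h1) with hbc | hbc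
  · -- b*c = 0, hence p = 0
    have hp : p = 0 := by nlinarith [sq_nonneg p]
    have hbc' : q^2 * (b * c) = 0 := by
      have : b * c = 0 := by linarith
      rw [this]; ring
    subst hp
    nlinarith [sq_nonneg (b*g - c*f), hbc']
  · -- b*c < 0
    have key : (-(4*(b*c))) * ((b*g - c*f)^2 - (p*f+q*b)*(p*g+q*c))
        = (2*(b*c)*q + p*(f*c+b*g))^2 + (-(p^2+4*(b*c))) * (b*g - c*f)^2 := by
      ring
    nlinarith [sq_nonneg (2*(b*c)*q + p*(f*c+b*g)),
      mul_nonneg (by linarith : (0:ℝ) ≤ -(p^2+4*(b*c))) (sq_nonneg (b*g - c*f))]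

/-- Goldman, one direction: if tr[A,B] < 2 then A and B are hyperbolic. -/
theorem commutator_trace_lt_two_hyperbolic
    (A B : Matrix (Fin 2) (Fin 2) ℝ) (hA : A.det = 1) (hB : B.det = 1)
    (h : (A * B * A⁻¹ * B⁻¹).trace < 2) :
    |A.trace| > 2 ∧ |B.trace| > 2 := by
  have hAinv : A⁻¹ = A.adjugate := by
    rw [Matrix.inv_def, hA]; simp
  have hBinv : B⁻¹ = B.adjugate := by
    rw [Matrix.inv_def, hB]; simp
  rw [hAinv, hBinv, Matrix.adjugate_fin_two, Matrix.adjugate_fin_two] at h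
  set a := A 0 0 with ha
  set b := A 0 1 with hb
  set c := A 1 0 with hc
  set d := A 1 1 with hd
  set e := B 0 0 with he
  set f := B 0 1 with hf
  set g := B 1 0 with hg
  set k := B 1 1 with hk
  rw [Matrix.det_fin_two] at hA hB
  have hT : (A * B * !![A 1 1, -A 0 1; -A 1 0, A 0 0] *
      !![B 1 1, -B 0 1; -B 1 0, B 0 0]).trace
      = ((b*g - c*f)^2 - ((a-d)*f + (k-e)*b)*((a-d)*g + (k-e)*c)) + 2*(a*d - b*c)*(e*k - f*g) := by
    simp [Matrix.trace_fin_two, Matrix.mul_apply, Fin.sum_univ_two]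
    ring
  rw [hT, hA, hB] at h
  have hG : (b*g - c*f)^2 - ((a-d)*f + (k-e)*b)*((a-d)*g + (k-e)*c) < 0 := by linarith
  constructor
  · rw [Matrix.trace_fin_two, ← ha, ← hd]
    by_contra hcon
    push_neg at hcon
    have habs := abs_le.mp hcon
    have h1 : (a-d)^2 + 4*(b*c) ≤ 0 := by nlinarith [habs.1, habs.2]
    have := crux_goldman (a-d) (k-e) b c f g h1
    linarith
  · rw [Matrix.trace_fin_two, ← he, ← hk]
    by_contra hcon
    push_neg at hcon
    have habs := abs_le.mp hcon
    have h1 : (k-e)^2 + 4*(f*g) ≤ 0 := by nlinarith [habs.1, habs.2]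
    have := crux_goldman (k-e) (a-d) f g b c h1
    nlinarith [this]
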